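/- If Γ_M ⊢ B is intuitionistically derivable, then P is unsound for M in the sense that there exists an atom R(ē) with R(ē) ∈ M but R(ē) ∉ I(P,M). -/

import Mathlib

namespace ASP

/-- A ground clause `head ← pos, ¬neg` of an answer set program. -/
structure GClause (α : Type) where
  head : α
  pos : List α
  neg : List α

variable {α : Type}

/-- Immediate-consequence operator of the Gelfond–Lifschitz reduct `P^M`:
`F(I) = I ∪ {a | some clause a ← a₁,…,aₙ of P^M has all aᵢ ∈ I}`. -/
def tcons (P : Set (GClause α)) (M : Set α) : Set α →o Set α where
  toFun I := I ∪ {a | ∃ c ∈ P, c.head = a ∧ (∀ b ∈ c.pos, b ∈ I) ∧ (∀ b ∈ c.neg, b ∉ M)}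
  monotone' := by
    intro I J h x hx
    rcases hx with hx | ⟨c, hc, h1, h2, h3⟩
    · exact Or.inl (h hx)
    · exact Or.inr ⟨c, hc, h1, fun b hb => h (h2 b hb), h3⟩

/-- The interpretation `I(P,M)`: least fixed point of the immediate-consequence
operator of the reduct `P^M`. -/
def interp (P : Set (GClause α)) (M : Set α) : Set α := OrderHom.lfp (tcons P M)

/-- `M` is a stable model (answer set) of `P` iff `M = I(P,M)`. -/
def IsStable (P : Set (GClause α)) (M : Set α) : Prop := M = interp P M

end ASP
namespace ASP

/-- Formulas of minimal implicational propositional logic over atoms `α`. -/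
inductive PForm (α : Type) where
  | at_ : α → PForm α
  | imp : PForm α → PForm α → PForm α

/-- Provability in minimal propositional logic (only → introduction/elimination). -/
inductive PPrv {α : Type} : Set (PForm α) → PForm α → Prop
  | ax {Γ : Set (PForm α)} {φ : PForm α} : φ ∈ Γ → PPrv Γ φ
  | impI {Γ : Set (PForm α)} {φ ψ : PForm α} : PPrv (insert φ Γ) ψ → PPrv Γ (.imp φ ψ)
  | impE {Γ : Set (PForm α)} {φ ψ : PForm α} : PPrv Γ (.imp φ ψ) → PPrv Γ φ → PPrv Γ ψ

end ASP
namespace TR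

/-- A ground atom `R(c̄)`: predicate index plus constant arguments. -/
structure GA where
  pred : ℕ
  args : List ℕ
deriving DecidableEq

/-- Atom alphabet of the translated formula φ: for every program predicate `R`
there are `R`, `R̄`, `R!`, `R?`; pair predicates `RP`; clause predicates `K⁰`
and nullary `K̄⁰`; and the nullary `•, ∘, A, B, ⊙`. -/
inductive At where
  | pos : GA → At
  | bar : GA → At
  | bang : GA → At
  | quest : GA → At
  | mem : GA → GA → At
  | k : ℕ → List ℕ → At
  | kbar : ℕ → At
  | bullet : At
  | circ : At
  | unsound : At
  | incomplete : At
  | lup : At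
deriving DecidableEq

abbrev F := ASP.PForm At

def av (a : At) : F := .at_ a

def imps (l : List F) (t : F) : F := l.foldr ASP.PForm.imp t

/-- Axioms (1): `(R(c̄)→⊙) → (R̄(c̄)→⊙) → ⊙`. -/
def ax1 (B : Set GA) : Set F :=
  {f | ∃ a ∈ B, f = .imp (.imp (av (.pos a)) (av .lup)) (.imp (.imp (av (.bar a)) (av .lup)) (av .lup))}

/-- Axioms (2): `Ω→⊙`, `A→⊙`, `B→⊙`. -/
def ax2 (ω : GA) : Set F :=
  {.imp (av (.pos ω)) (av .lup), .imp (av .unsound) (av .lup), .imp (av .incomplete) (av .lup)}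

/-- Axioms (3): `R̄(c̄) → (R!(c̄)→•) → A`. -/
def ax3 (B : Set GA) : Set F :=
  {f | ∃ a ∈ B, f = .imp (av (.bar a)) (.imp (.imp (av (.bang a)) (av .bullet)) (av .unsound))}

/-- Axioms (4): `R(c̄) → (R?(c̄)→∘) → B`. -/
def ax4 (B : Set GA) : Set F :=
  {f | ∃ a ∈ B, f = .imp (av (.pos a)) (.imp (.imp (av (.quest a)) (av .circ)) (av .incomplete))}

/-- Axiom (5) for a ground clause `R(ē) ← P₁(c̄₁),…,P_r(c̄_r), ¬S₁(d̄₁),…,¬S_s(d̄_s)`: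
`R!(ē) → (P₁!(c̄₁)→•) → ⋯ → (P_r!(c̄_r)→•) → S̄₁(d̄₁) → ⋯ → S̄_s(d̄_s) → •`. -/
def clax (c : ASP.GClause GA) : F :=
  .imp (av (.bang c.head))
    (imps (c.pos.map (fun b => .imp (av (.bang b)) (av .bullet)) ++
           c.neg.map (fun s => av (.bar s))) (av .bullet))

def ax5 (Pg : List (ASP.GClause GA)) : Set F := {f | ∃ c ∈ Pg, f = clax c}

/-- Axioms (6): `R?(c̄) → (K⁰₁(c̄)→K̄⁰₁) → ⋯ → (K⁰_l(c̄)→K̄⁰_l) → ∘`,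
where K₁,…,K_l are all clauses whose target predicate is that of the atom. -/
def ax6 (Pg : List (ASP.GClause GA)) (B : Set GA) : Set F :=
  {f | ∃ a ∈ B, f = .imp (av (.quest a))
    (imps (((Pg.zipIdx.map Prod.swap).filter (fun jc => jc.2.head.pred == a.pred)).map
      (fun jc => ASP.PForm.imp (av (.k jc.1 a.args)) (av (.kbar jc.1)))) (av .circ))}

/-- Axioms (7)-(8): a mismatch between the queried arguments and the clause head
arguments immediately yields `K⁰(c̄) → K̄⁰`. -/
def ax7 (Pg : List (ASP.GClause GA)) (B : Set GA) : Set F :=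
  {f | ∃ jc ∈ (Pg.zipIdx.map Prod.swap), ∃ a ∈ B, a.pred = jc.2.head.pred ∧ a.args ≠ jc.2.head.args ∧
    f = .imp (av (.k jc.1 a.args)) (av (.kbar jc.1))}

/-- Axioms (10): `K⁰(ē) → (P?(c̄) → RP(ē,c̄) → ∘) → K̄⁰`, for each positive body atom. -/
def ax10 (Pg : List (ASP.GClause GA)) : Set F :=
  {f | ∃ jc ∈ (Pg.zipIdx.map Prod.swap), ∃ b ∈ jc.2.pos, f = .imp (av (.k jc.1 jc.2.head.args))
    (.imp (.imp (av (.quest b)) (.imp (av (.mem jc.2.head b)) (av .circ))) (av (.kbar jc.1)))}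

/-- Axioms (11): `K⁰(ē) → S(d̄) → K̄⁰`, for each negative body atom `¬S(d̄)`. -/
def ax11 (Pg : List (ASP.GClause GA)) : Set F :=
  {f | ∃ jc ∈ (Pg.zipIdx.map Prod.swap), ∃ s ∈ jc.2.neg, f = .imp (av (.k jc.1 jc.2.head.args))
    (.imp (av (.pos s)) (av (.kbar jc.1)))}

/-- Axioms (12): transitivity `RP(ā,b̄) → PQ(b̄,c̄) → (RQ(ā,c̄)→∘) → ∘`. -/
def ax12 (B : Set GA) : Set F :=
  {f | ∃ a ∈ B, ∃ b ∈ B, ∃ c ∈ B, f = .imp (av (.mem a b)) (.imp (av (.mem b c))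
    (.imp (.imp (av (.mem a c)) (av .circ)) (av .circ)))}

/-- Axioms (13): loop detection `PP(ā,ā) → ∘`. -/
def ax13 (B : Set GA) : Set F := {f | ∃ a ∈ B, f = .imp (av (.mem a a)) (av .circ)}

/-- All axioms of the translated formula φ. -/
def Axioms (Pg : List (ASP.GClause GA)) (B : Set GA) (ω : GA) : Set F :=
  ax1 B ∪ ax2 ω ∪ ax3 B ∪ ax4 B ∪ ax5 Pg ∪ ax6 Pg B ∪ ax7 Pg B ∪
    ax10 Pg ∪ ax11 Pg ∪ ax12 B ∪ ax13 B

/-- `Γ_M`: the union of `M ∪ M̄` with the axioms of φ. -/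
def GammaM (Pg : List (ASP.GClause GA)) (B : Set GA) (ω : GA) (M : Set GA) : Set F :=
  Axioms Pg B ω ∪ {f | ∃ a ∈ M, f = av (.pos a)} ∪ {f | ∃ a ∈ B, a ∉ M ∧ f = av (.bar a)}

/-- The implicational formula of a clause of `P̄` (negative atoms replaced by barred ones). -/
def cbarF (c : ASP.GClause GA) : F :=
  imps (c.pos.map (fun b => av (.pos b)) ++ c.neg.map (fun s => av (.bar s))) (av (.pos c.head))

/-- The environment `P̄ ∪ M̄`. -/
def PbarMbar (Pg : List (ASP.GClause GA)) (B : Set GA) (M : Set GA) : Set F :=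
  {f | ∃ c ∈ Pg, f = cbarF c} ∪ {f | ∃ a ∈ B, a ∉ M ∧ f = av (.bar a)}

def progSet (Pg : List (ASP.GClause GA)) : Set (ASP.GClause GA) := {c | c ∈ Pg}

/-- All atoms of the program lie in the Herbrand base `B`. -/
def WfProg (Pg : List (ASP.GClause GA)) (B : Set GA) : Prop :=
  ∀ c ∈ Pg, c.head ∈ B ∧ (∀ b ∈ c.pos, b ∈ B) ∧ (∀ s ∈ c.neg, s ∈ B)

end TR

/-!
The proof is semantic. Suppose `M ⊆ I(P,M)`. Read `R?(ē)` as `R(ē) ∈ I(P,M)`, `RP(ē,c̄)` as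
"`P(c̄)` enters the least fixed point at an earlier stage than `R(ē)`", and `K⁰ⱼ(ē)` as
"clause `j` derives `R(ē)` from atoms of earlier stages with its negative body outside `M`";
make `∘`, `B` and every `K̄⁰ⱼ` false and all other atoms true. Every formula of `Γ_M` is then
classically true (loops `PP(ā,ā)` are false since stages strictly decrease), while `B` is false,
so `Γ_M ⊢ B` contradicts soundness of minimal logic.
-/

namespace ASP

variable {α : Type}

def PForm.Eval (v : α → Prop) : PForm α → Prop
  | .at_ a => v a
  | .imp φ ψ => φ.Eval v → ψ.Eval v

theorem PPrv.sound {v : α → Prop} {Γ : Set (PForm α)} {φ : PForm α} (h : PPrv Γ φ)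
    (hΓ : ∀ ψ ∈ Γ, ψ.Eval v) : φ.Eval v := by
  induction h with
  | ax hmem => exact hΓ _ hmem
  | impI _ ih => exact fun hφ => ih fun ψ hψ => hψ.elim (· ▸ hφ) (hΓ ψ)
  | impE _ _ ih₁ ih₂ => exact ih₁ hΓ (ih₂ hΓ)

section Stages

variable (P : Set (GClause α)) (M : Set α)

def stage (n : ℕ) : Set α := (tcons P M)^[n] ∅

theorem stage_zero : stage P M 0 = ∅ := rfl

theorem stage_succ (n : ℕ) : stage P M (n + 1) = tcons P M (stage P M n) :=
  Function.iterate_succ_apply' _ _ _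

theorem monotone_stage : Monotone (stage P M) :=
  monotone_nat_of_le_succ fun n => by
    rw [stage_succ]
    exact Set.subset_union_left

theorem stage_subset_interp (n : ℕ) : stage P M n ⊆ interp P M := by
  induction n with
  | zero => exact Set.empty_subset _
  | succ n ih =>
    rw [stage_succ, interp, ← OrderHom.map_lfp]
    exact (tcons P M).monotone ih

theorem interp_subset_iUnion_stage : interp P M ⊆ ⋃ n, stage P M n := by
  classical
  refine OrderHom.lfp_le _ fun a ha => ?_
  rcases ha with ha | ⟨c, hc, rfl, hpos, hneg⟩
  · exact ha
  · obtain ⟨N, hN⟩ := (monotone_stage P M).directed_le.exists_mem_subset_of_finset_subset_biUnion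
      (s := c.pos.toFinset) (by simpa [Set.subset_def] using hpos)
    refine Set.mem_iUnion.2 ⟨N + 1, ?_⟩
    rw [stage_succ]
    exact Or.inr ⟨c, hc, rfl, fun b hb => hN (by simpa using hb), hneg⟩

/-- The first stage at which an atom of `I(P,M)` appears (`0` for atoms outside `I(P,M)`). -/
noncomputable def rank (a : α) : ℕ := sInf {n | a ∈ stage P M n}

theorem exists_clause_of_mem_interp {a : α} (ha : a ∈ interp P M) :
    ∃ c ∈ P, c.head = a ∧ (∀ b ∈ c.pos, b ∈ interp P M ∧ rank P M b < rank P M a) ∧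
      ∀ s ∈ c.neg, s ∉ M := by
  have hne : {n | a ∈ stage P M n}.Nonempty := by
    exact Set.mem_iUnion.1 (interp_subset_iUnion_stage P M ha)
  have hrank : a ∈ stage P M (rank P M a) := Nat.sInf_mem hne
  obtain ⟨m, hm⟩ : ∃ m, rank P M a = m + 1 := by
    refine Nat.exists_eq_succ_of_ne_zero fun h0 => ?_
    rw [h0, stage_zero] at hrank
    exact hrank
  rw [hm, stage_succ] at hrank
  rcases hrank with hprev | ⟨c, hc, hhead, hpos, hneg⟩
  · have hlt : m < rank P M a := by omega
    exact absurd hprev (Nat.notMem_of_lt_sInf hlt)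
  · refine ⟨c, hc, hhead, fun b hb => ⟨stage_subset_interp P M m (hpos b hb), ?_⟩, hneg⟩
    rw [hm]
    exact Nat.lt_succ_of_le (Nat.sInf_le (hpos b hb))

end Stages

end ASP

namespace TR

open ASP

theorem eval_imps_of_eval {v : At → Prop} {t : F} (ht : t.Eval v) :
    ∀ L : List F, (imps L t).Eval v
  | [] => ht
  | _ :: L => fun _ => eval_imps_of_eval ht L

theorem eval_imps_of_not_eval {v : At → Prop} {t g : F} (hg : ¬ g.Eval v) :
    ∀ L : List F, g ∈ L → (imps L t).Eval v
  | f :: L, hm => by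
    rcases List.mem_cons.1 hm with rfl | hm
    · exact fun hf => absurd hf hg
    · exact fun _ => eval_imps_of_not_eval hg L hm

theorem getElem?_of_mem_map_swap_zipIdx {β : Type} {l : List β} {p : ℕ × β}
    (h : p ∈ l.zipIdx.map Prod.swap) : l[p.1]? = some p.2 := by
  obtain ⟨q, hq, rfl⟩ := List.mem_map.1 h
  exact List.mem_zipIdx_iff_getElem?.1 hq

section Countermodel

variable (Pg : List (GClause GA)) (M : Set GA)

noncomputable def countermodel : At → Prop
  | .pos a => a ∈ M
  | .quest a => a ∈ interp (progSet Pg) M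
  | .mem a b => rank (progSet Pg) M b < rank (progSet Pg) M a
  | .k j args => ∃ c, Pg[j]? = some c ∧ c.head.args = args ∧
      (∀ b ∈ c.pos, b ∈ interp (progSet Pg) M ∧ rank (progSet Pg) M b < rank (progSet Pg) M c.head) ∧
      ∀ s ∈ c.neg, s ∉ M
  | .kbar _ | .circ | .incomplete => False
  | .bar _ | .bang _ | .bullet | .unsound | .lup => True

variable {Pg M}

theorem countermodel_k_of_mem {jc : ℕ × GClause GA} (hjc : jc ∈ Pg.zipIdx.map Prod.swap)
    {args : List ℕ} (hk : countermodel Pg M (.k jc.1 args)) :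
    jc.2.head.args = args ∧
      (∀ b ∈ jc.2.pos, b ∈ interp (progSet Pg) M ∧
        rank (progSet Pg) M b < rank (progSet Pg) M jc.2.head) ∧
      ∀ s ∈ jc.2.neg, s ∉ M := by
  obtain ⟨c, hc, hk⟩ := hk
  obtain rfl : c = jc.2 := Option.some.inj (hc.symm.trans (getElem?_of_mem_map_swap_zipIdx hjc))
  exact hk

theorem eval_countermodel_of_mem_ax6 {B : Set GA} {ψ : F} (hψ : ψ ∈ ax6 Pg B) :
    ψ.Eval (countermodel Pg M) := by
  obtain ⟨a, -, rfl⟩ := hψ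
  intro ha
  obtain ⟨c, hc, rfl, hpos, hneg⟩ := exists_clause_of_mem_interp (progSet Pg) M ha
  obtain ⟨j, hj⟩ := List.mem_iff_getElem?.1 hc
  refine eval_imps_of_not_eval (v := countermodel Pg M)
    (g := .imp (av (.k j c.head.args)) (av (.kbar j))) (fun hg => hg ⟨c, hj, rfl, hpos, hneg⟩) _ (List.mem_map.2 ⟨(j, c), ?_, rfl⟩)
  exact List.mem_filter.2
    ⟨List.mem_map.2 ⟨(c, j), List.mem_zipIdx_iff_getElem?.2 hj, rfl⟩, by simp⟩

theorem eval_countermodel_of_mem_axioms (hMI : M ⊆ interp (progSet Pg) M) {B : Set GA} {ω : GA}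
    {ψ : F} (hψ : ψ ∈ Axioms Pg B ω) : ψ.Eval (countermodel Pg M) := by
  rcases hψ with (((((((((h1 | h2) | h3) | h4) | h5) | h6) | h7) | h10) | h11) | h12) | h13
  · obtain ⟨a, -, rfl⟩ := h1
    exact fun _ _ => trivial
  · simp only [ax2, Set.mem_insert_iff, Set.mem_singleton_iff] at h2
    rcases h2 with rfl | rfl | rfl <;> exact fun _ => trivial
  · obtain ⟨a, -, rfl⟩ := h3
    exact fun _ _ => trivial
  · obtain ⟨a, -, rfl⟩ := h4
    exact fun haM hq => hq (hMI haM)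
  · obtain ⟨c, -, rfl⟩ := h5
    exact fun _ => eval_imps_of_eval (v := countermodel Pg M) (t := av .bullet) trivial _
  · exact eval_countermodel_of_mem_ax6 h6
  · obtain ⟨jc, hjc, a, -, -, hargs, rfl⟩ := h7
    exact fun hk => hargs (countermodel_k_of_mem hjc hk).1.symm
  · obtain ⟨jc, hjc, b, hb, rfl⟩ := h10
    intro hk hloop
    obtain ⟨hbI, hlt⟩ := (countermodel_k_of_mem hjc hk).2.1 b hb
    exact hloop hbI hlt
  · obtain ⟨jc, hjc, s, hs, rfl⟩ := h11
    exact fun hk hsM => (countermodel_k_of_mem hjc hk).2.2 s hs hsM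
  · obtain ⟨a, -, b, -, c, -, rfl⟩ := h12
    exact fun hab hbc hac => hac (hbc.trans hab)
  · obtain ⟨a, -, rfl⟩ := h13
    exact lt_irrefl _

theorem eval_countermodel_of_mem_GammaM (hMI : M ⊆ interp (progSet Pg) M) {B : Set GA}
    {ω : GA} {ψ : F} (hψ : ψ ∈ GammaM Pg B ω M) : ψ.Eval (countermodel Pg M) := by
  rcases hψ with (hax | ⟨a, ha, rfl⟩) | ⟨a, -, -, rfl⟩
  · exact eval_countermodel_of_mem_axioms hMI hax
  · exact ha
  · trivial

end Countermodel

end TR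

theorem stmt12_general (Pg : List (ASP.GClause TR.GA)) (B : Set TR.GA) (ω : TR.GA)
    (M : Set TR.GA)
    (h : ASP.PPrv (TR.GammaM Pg B ω M) (TR.av .incomplete)) :
    ∃ a ∈ M, a ∉ ASP.interp (TR.progSet Pg) M := by
  by_contra! hMI
  exact h.sound fun _ => TR.eval_countermodel_of_mem_GammaM hMI

/-- If `Γ_M ⊢ B` is derivable then some atom `R(ē)` satisfies `R(ē) ∈ M` but
`R(ē) ∉ I(P,M)`. -/
theorem stmt12 (Pg : List (ASP.GClause TR.GA)) (B : Set TR.GA) (ω : TR.GA)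
    (M : Set TR.GA) (hW : TR.WfProg Pg B) (hM : M ⊆ B)
    (h : ASP.PPrv (TR.GammaM Pg B ω M) (TR.av .incomplete)) :
    ∃ a ∈ M, a ∉ ASP.interp (TR.progSet Pg) M :=
  stmt12_general Pg B ω M h
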